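/- Let (G, C) be a characteristic pair with C = [C_1,...,C_r], let Ḡ be the reduced lex Gröbner basis of sat(C), and let C̄ be the W-characteristic set of ⟨Ḡ⟩. Then the set of leading variables of Ḡ equals the set of leading variables of G; equivalently, the parameters of C̄ coincide with the parameters of C. -/

import Mathlib

open MvPolynomial

namespace CharDec

variable {K : Type*} [Field K] {σ : Type*} [LinearOrder σ]

/-- Lexicographic comparison of exponent vectors (larger variables dominate):
`a ≤ b` iff `a = b` or at the greatest index where they differ, `a` is smaller. -/
def lexLe (a b : σ →₀ ℕ) : Prop :=
  a = b ∨ ∃ i : σ, a i < b i ∧ ∀ j : σ, i < j → a j = b j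

/-- `m` is the leading monomial of `f` with respect to the lex term ordering. -/
def IsLeadMon (f : MvPolynomial σ K) (m : σ →₀ ℕ) : Prop :=
  m ∈ f.support ∧ ∀ m' ∈ f.support, lexLe m' m

/-- `f` has leading (greatest actually occurring) variable `i`. -/
def HasLV (f : MvPolynomial σ K) (i : σ) : Prop :=
  i ∈ f.vars ∧ ∀ j ∈ f.vars, j ≤ i

/-- The coefficient of `(X i) ^ d` in `f`, as a polynomial in the remaining variables. -/
noncomputable def coeffWrt (i : σ) (d : ℕ) (f : MvPolynomial σ K) :
    MvPolynomial σ K :=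
  ∑ m ∈ f.support.filter (fun m => m i = d), monomial (m.update i 0) (f.coeff m)

/-- The initial (leading coefficient in the leading variable) of `f` with
respect to the variable `i`. -/
noncomputable def initialWrt (i : σ) (f : MvPolynomial σ K) : MvPolynomial σ K :=
  coeffWrt i (f.degreeOf i) f

/-- `R` is the pseudo-remainder of `P` on pseudo-division by `Q` with respect
to the variable `y` (classical pseudo-division, with the exponent
`deg P - deg Q + 1` when `deg P ≥ deg Q`, and `0` otherwise). -/
def IsPrem (y : σ) (Q P R : MvPolynomial σ K) : Prop :=
  ∃ A : MvPolynomial σ K,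
    (initialWrt y Q) ^ (P.degreeOf y + 1 - Q.degreeOf y) * P = A * Q + R ∧
    R.degreeOf y < Q.degreeOf y

/-- `IterPrem P L R` : `R` is the iterated pseudo-remainder of `P` by the
list `L` of pairs (leading variable, divisor), divisors being used from the
head of the list on. -/
def IterPrem : MvPolynomial σ K → List (σ × MvPolynomial σ K) →
    MvPolynomial σ K → Prop
  | P, [], R => R = P
  | P, e :: L, R => ∃ S, IsPrem e.1 e.2 P S ∧ IterPrem S L R

/-- A triangular set: a list of (leading variable, polynomial) pairs with
strictly increasing leading variables. -/
structure TriSet (K : Type*) [Field K] (σ : Type*) [LinearOrder σ] where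
  elems : List (σ × MvPolynomial σ K)
  sorted : elems.Pairwise (fun e e' => e.1 < e'.1)
  hlv : ∀ e ∈ elems, HasLV e.2 e.1

namespace TriSet

/-- The list of leading variables of a triangular set. -/
def lvs (T : TriSet K σ) : List σ := T.elems.map Prod.fst

/-- The list of polynomials of a triangular set. -/
def polys (T : TriSet K σ) : List (MvPolynomial σ K) := T.elems.map Prod.snd

/-- A variable is a parameter of `T` if it is not a leading variable of `T`. -/
def IsParam (T : TriSet K σ) (j : σ) : Prop := j ∉ T.lvs

/-- `T` is normal: every initial involves only the parameters of `T`. -/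
def Normal (T : TriSet K σ) : Prop :=
  ∀ e ∈ T.elems, ∀ j ∈ (initialWrt e.1 e.2).vars, T.IsParam j

/-- `T` is zero-dimensional: every variable is a leading variable of `T`. -/
def ZeroDim (T : TriSet K σ) : Prop := ∀ i : σ, i ∈ T.lvs

/-- The product of the initials of `T`. -/
noncomputable def prodInit (T : TriSet K σ) : MvPolynomial σ K :=
  (T.elems.map fun e => initialWrt e.1 e.2).prod

/-- The ideal generated by the polynomials of `T`. -/
noncomputable def ideal (T : TriSet K σ) : Ideal (MvPolynomial σ K) :=
  Ideal.span {p | ∃ e ∈ T.elems, p = e.2}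

end TriSet

/-- The saturation `I : J^∞` of an ideal `I` by an element `J`. -/
def satBy (I : Ideal (MvPolynomial σ K)) (J : MvPolynomial σ K) :
    Ideal (MvPolynomial σ K) where
  carrier := {p | ∃ k : ℕ, J ^ k * p ∈ I}
  zero_mem' := ⟨0, by simp⟩
  add_mem' := by
    rintro a b ⟨k, hk⟩ ⟨l, hl⟩
    refine ⟨k + l, ?_⟩
    have h : J ^ (k + l) * (a + b) = J ^ l * (J ^ k * a) + J ^ k * (J ^ l * b) := by ring
    rw [h]
    exact add_mem (Ideal.mul_mem_left _ _ hk) (Ideal.mul_mem_left _ _ hl)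
  smul_mem' := by
    rintro c a ⟨k, hk⟩
    refine ⟨k, ?_⟩
    have h : J ^ k * (c • a) = c * (J ^ k * a) := by rw [smul_eq_mul]; ring
    rw [h]
    exact Ideal.mul_mem_left _ _ hk

namespace TriSet

/-- The saturated ideal `sat(T) = ⟨T⟩ : (∏ initials)^∞` of a triangular set. -/
noncomputable def sat (T : TriSet K σ) : Ideal (MvPolynomial σ K) :=
  satBy T.ideal T.prodInit

/-- The triangular set formed by the first `i` elements of `T`. -/
def take (T : TriSet K σ) (i : ℕ) : TriSet K σ :=
  ⟨T.elems.take i, List.Pairwise.sublist (List.take_sublist i T.elems) T.sorted,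
    fun e he => T.hlv e (List.mem_of_mem_take he)⟩

/-- `T` is a regular set: each initial is neither zero nor a zero-divisor
modulo the saturated ideal of the preceding subset. -/
def Regular (T : TriSet K σ) : Prop :=
  ∀ i : ℕ, ∀ h : i < T.elems.length,
    initialWrt (T.elems.get ⟨i, h⟩).1 (T.elems.get ⟨i, h⟩).2 ∉ (T.take i).sat ∧
    ∀ p : MvPolynomial σ K,
      initialWrt (T.elems.get ⟨i, h⟩).1 (T.elems.get ⟨i, h⟩).2 * p ∈ (T.take i).sat →
        p ∈ (T.take i).sat

end TriSet

/-- The zero set, in (the algebraic closure of `K`)^σ, of a set of polynomials. -/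
def zeroSet (S : Set (MvPolynomial σ K)) : Set (σ → AlgebraicClosure K) :=
  {x | ∀ p ∈ S, aeval x p = 0}

/-- `Zero(T / ini(T))` : the common zeros of `T` at which no initial of `T` vanishes. -/
def TriSet.zeroQuasi (T : TriSet K σ) : Set (σ → AlgebraicClosure K) :=
  {x | (∀ e ∈ T.elems, aeval x e.2 = 0) ∧
       (∀ e ∈ T.elems, aeval x (initialWrt e.1 e.2) ≠ 0)}

/-- `G` is a (finite) Gröbner basis of `I` with respect to the lex term
ordering: `G ⊆ I` and the leading monomial of every nonzero element of `I` is
divisible by the leading monomial of some element of `G`. -/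
def IsGB (G : Set (MvPolynomial σ K)) (I : Ideal (MvPolynomial σ K)) : Prop :=
  G.Finite ∧ G ⊆ ↑I ∧
  ∀ f ∈ I, f ≠ 0 → ∃ g ∈ G, ∃ mf mg, IsLeadMon f mf ∧ IsLeadMon g mg ∧ ∀ j, mg j ≤ mf j

/-- `G` is the reduced lex Gröbner basis of `I`. -/
def IsReducedGB (G : Set (MvPolynomial σ K)) (I : Ideal (MvPolynomial σ K)) : Prop :=
  IsGB G I ∧ (0 : MvPolynomial σ K) ∉ G ∧
  (∀ g ∈ G, ∀ m, IsLeadMon g m → g.coeff m = 1) ∧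
  (∀ g ∈ G, ∀ g' ∈ G, g' ≠ g → ∀ m ∈ g.support, ∀ m', IsLeadMon g' m' →
    ¬ (∀ j, m' j ≤ m j))

/-- `C` is the W-characteristic set extracted from the (reduced lex Gröbner
basis) `G`: for each leading variable occurring in `G`, `C` contains the
lex-minimal element of `G` with that leading variable. -/
def IsWCharOf (C : TriSet K σ) (G : Set (MvPolynomial σ K)) : Prop :=
  (∀ e ∈ C.elems, e.2 ∈ G ∧
    ∀ g ∈ G, HasLV g e.1 → ∀ mg me, IsLeadMon g mg → IsLeadMon e.2 me → lexLe me mg) ∧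
  (∀ g ∈ G, ∀ i : σ, HasLV g i → i ∈ C.lvs)

/-- The Sylvester-style matrix of two univariate polynomials. -/
noncomputable def sylvester {R : Type*} [CommRing R] (f g : Polynomial R) :
    Matrix (Fin (f.natDegree + g.natDegree)) (Fin (f.natDegree + g.natDegree)) R :=
  Matrix.of fun i j =>
    if (i : ℕ) < g.natDegree then
      (if (i : ℕ) ≤ (j : ℕ) then f.coeff ((j : ℕ) - (i : ℕ)) else 0)
    else
      (if (i : ℕ) - g.natDegree ≤ (j : ℕ) then g.coeff ((j : ℕ) - ((i : ℕ) - g.natDegree))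
       else 0)

/-- The resultant of two univariate polynomials, as the determinant of their
Sylvester matrix. -/
noncomputable def resultantP {R : Type*} [CommRing R] (f g : Polynomial R) : R :=
  (sylvester f g).det

/-- View a multivariate polynomial as a univariate polynomial in the variable `i`. -/
noncomputable def toUni (i : σ) (f : MvPolynomial σ K) :
    Polynomial (MvPolynomial σ K) :=
  aeval (fun j => if j = i then Polynomial.X else Polynomial.C (X j)) f

/-- The resultant of two multivariate polynomials with respect to the variable `i`. -/
noncomputable def resWrt (i : σ) (f g : MvPolynomial σ K) : MvPolynomial σ K :=
  resultantP (toUni i f) (toUni i g)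

/-- The iterated resultant of `f` with respect to a list of
(leading variable, divisor) pairs, used from the head of the list on. -/
noncomputable def iterRes : MvPolynomial σ K → List (σ × MvPolynomial σ K) →
    MvPolynomial σ K
  | f, [] => f
  | f, e :: L => iterRes (resWrt e.1 f e.2) L

end CharDec

/-!
Both sides equal the set of leading variables of `C`: for `G` this is the definition of the
W-characteristic set, so the work is on the side of `Ḡ`.

Since `C` is normal, its initials involve only parameters; hence a nonzero polynomial in the
parameters is never a zero divisor modulo `sat(C)`, and the elements of `C` above the variables
of `f` can be eliminated from a relation `s * f ∈ ⟨C⟩`. Consequently, if `f ∈ sat(C)` has a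
parameter `x_l` as greatest variable, all coefficients of `f` in `x_l` lie in `sat(C)`.

If some `g ∈ Ḡ` had a parameter `x_l` as leading variable, its initial in `x_l` would thus lie in
`sat(C)`, so its leading monomial, a monomial of `g` with the power of `x_l` removed, would be
divisible by the leading monomial of some other element of `Ḡ`, against reducedness. Conversely,
the leading monomial of `C_i ∈ sat(C)` is divisible by that of some `g ∈ Ḡ`, which is not a
constant; the leading variable of `g`, being a leading variable of `C`, can only be `x_i`, since
any other variable of that monomial occurs in the initial of `C_i` and is a parameter.
-/

open Polynomial in
lemma Polynomial.exists_C_pow_mul_eq_zero_of_degree_mul_lt {R : Type*} [CommRing R]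
    {q : R[X]} {n : ℕ} (hq : q.natDegree ≤ n) {a : R[X]} (haq : (a * q).degree < n) :
    ∃ N : ℕ, C (q.coeff n) ^ N * a = 0 := by
  suffices H : ∀ k : ℕ, ∀ a : R[X], a.degree < k → (a * q).degree < n →
      ∃ N : ℕ, C (q.coeff n) ^ N * a = 0 from
    H _ a (degree_le_natDegree.trans_lt (WithBot.coe_lt_coe.mpr a.natDegree.lt_succ_self)) haq
  intro k
  induction k with
  | zero =>
    intro a ha _
    refine ⟨0, ?_⟩
    ext m
    simpa using (degree_lt_iff_coeff_zero a 0).mp ha m m.zero_le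
  | succ k ih =>
    intro a ha haq
    -- `(a * q).coeff (k + n) = a.coeff k * q.coeff n` vanishes
    have hca : (C (q.coeff n) * a).degree < k := by
      rw [degree_lt_iff_coeff_zero]
      intro m hm
      rw [coeff_C_mul]
      rcases hm.eq_or_lt with rfl | hm
      · have hak : a.natDegree ≤ k := natDegree_le_iff_coeff_eq_zero.mpr fun N hN =>
          (degree_lt_iff_coeff_zero a _).mp ha N hN
        have htop := coeff_mul_add_eq_of_natDegree_le hak hq
        rw [(degree_lt_iff_coeff_zero _ _).mp haq _ (Nat.le_add_left n k)] at htop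
        rw [mul_comm, htop]
      · rw [(degree_lt_iff_coeff_zero a _).mp ha m hm, mul_zero]
    have hcaq : (C (q.coeff n) * a * q).degree < n := by
      rw [degree_lt_iff_coeff_zero]
      intro m hm
      rw [mul_assoc, coeff_C_mul, (degree_lt_iff_coeff_zero _ _).mp haq m hm, mul_zero]
    obtain ⟨N, hN⟩ := ih _ hca hcaq
    exact ⟨N + 1, by rw [pow_succ, mul_assoc, hN]⟩

namespace CharDec

lemma exists_eq_append_of_pairwise_fst_lt {σ β : Type*} [LinearOrder σ] {L : List (σ × β)}
    (hL : L.Pairwise fun e e' => e.1 < e'.1) (l : σ) :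
    ∃ L₁ L₂, L = L₁ ++ L₂ ∧ (∀ e ∈ L₁, e.1 < l) ∧ ∀ e ∈ L₂, l ≤ e.1 := by
  induction L with
  | nil => exact ⟨[], [], rfl, by simp, by simp⟩
  | cons a L ih =>
    obtain ⟨ha, hL⟩ := List.pairwise_cons.mp hL
    by_cases hal : a.1 < l
    · obtain ⟨L₁, L₂, rfl, h₁, h₂⟩ := ih hL
      exact ⟨a :: L₁, L₂, rfl, by simpa [hal] using h₁, h₂⟩
    · refine ⟨[], a :: L, rfl, by simp, ?_⟩
      simp only [List.mem_cons, forall_eq_or_imp]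
      exact ⟨not_lt.mp hal, fun e he => (not_lt.mp hal).trans (ha e he).le⟩

section CoeffWrt

variable {K : Type*} [Field K] {σ : Type*}

lemma coeff_coeffWrt (t : σ) (d : ℕ) (f : MvPolynomial σ K) (m : σ →₀ ℕ) :
    (coeffWrt t d f).coeff m = if m t = 0 then f.coeff (m.update t d) else 0 := by
  classical
  rw [coeffWrt, coeff_sum]
  split_ifs with hm
  · by_cases hf : m.update t d ∈ f.support
    · rw [Finset.sum_eq_single_of_mem (m.update t d) (Finset.mem_filter.mpr ⟨hf, by simp⟩)]
      · rw [coeff_monomial, if_pos (by rw [Finsupp.update_idem, ← hm, Finsupp.update_self])]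
      · rintro b hb hbm
        rw [coeff_monomial, if_neg]
        rintro hbm'
        apply hbm
        rw [← hbm', Finsupp.update_idem, ← (Finset.mem_filter.mp hb).2, Finsupp.update_self]
    · rw [notMem_support_iff.mp hf]
      refine Finset.sum_eq_zero fun b hb => ?_
      rw [coeff_monomial, if_neg]
      rintro rfl
      apply hf
      rw [Finsupp.update_idem, ← (Finset.mem_filter.mp hb).2, Finsupp.update_self]
      exact (Finset.mem_filter.mp hb).1
  · refine Finset.sum_eq_zero fun b _ => ?_
    rw [coeff_monomial, if_neg]
    rintro rfl
    simp at hm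

lemma mem_support_coeffWrt {t : σ} {d : ℕ} {f : MvPolynomial σ K} {m : σ →₀ ℕ} :
    m ∈ (coeffWrt t d f).support ↔ m t = 0 ∧ m.update t d ∈ f.support := by
  simp only [mem_support_iff, coeff_coeffWrt]
  by_cases hm : m t = 0 <;> simp [hm]

lemma update_mem_support_coeffWrt {t : σ} {f : MvPolynomial σ K} {m : σ →₀ ℕ}
    (hm : m ∈ f.support) : m.update t 0 ∈ (coeffWrt t (m t) f).support := by
  rw [mem_support_coeffWrt, Finsupp.update_idem, Finsupp.update_self]
  classical
  exact ⟨by simp [Finsupp.update_apply], hm⟩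

lemma degreeOf_coeffWrt_self (t : σ) (d : ℕ) (f : MvPolynomial σ K) :
    degreeOf t (coeffWrt t d f) = 0 := by
  rw [← Nat.le_zero, degreeOf_le_iff]
  intro m hm
  exact (mem_support_coeffWrt.mp hm).1.le

lemma degreeOf_initialWrt_self (t : σ) (f : MvPolynomial σ K) :
    degreeOf t (initialWrt t f) = 0 :=
  degreeOf_coeffWrt_self t _ f

lemma degreeOf_coeffWrt_le (j t : σ) (d : ℕ) (f : MvPolynomial σ K) :
    degreeOf j (coeffWrt t d f) ≤ degreeOf j f := by
  classical
  rw [degreeOf_le_iff]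
  intro m hm
  obtain ⟨hmt, hmf⟩ := mem_support_coeffWrt.mp hm
  have := monomial_le_degreeOf j hmf
  rw [Finsupp.update_apply] at this
  split_ifs at this with hj
  · rw [hj, hmt]; exact Nat.zero_le _
  · exact this

end CoeffWrt

section UnivariateView

variable {K : Type*} [Field K] {σ : Type*} [LinearOrder σ]

lemma toUni_monomial (t : σ) (m : σ →₀ ℕ) (c : K) :
    toUni t (monomial m c) =
      Polynomial.C (monomial (m.update t 0) c) * Polynomial.X ^ m t := by
  have hsplit : m.update t 0 + Finsupp.single t (m t) = m := by
    rw [← Finsupp.erase_eq_update_zero, Finsupp.erase_add_single]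
  have hrest : ((m.update t 0).prod fun j k =>
        (if j = t then Polynomial.X else Polynomial.C (X j)) ^ k) =
      Polynomial.C ((m.update t 0).prod fun j k => (X j : MvPolynomial σ K) ^ k) := by
    rw [Finsupp.prod, Finsupp.prod, map_prod]
    refine Finset.prod_congr rfl fun j hj => ?_
    have hjt : j ≠ t := by rintro rfl; simp at hj
    rw [if_neg hjt, map_pow]
  rw [toUni, aeval_monomial]
  conv_lhs => rw [← hsplit]
  rw [Finsupp.prod_add_index (by simp) (fun _ _ _ _ => pow_add _ _ _),
    Finsupp.prod_single_index (by simp), if_pos rfl, hrest, monomial_eq, map_mul,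
    Polynomial.algebraMap_apply, algebraMap_eq]
  ring

lemma coeff_toUni (t : σ) (f : MvPolynomial σ K) (d : ℕ) :
    (toUni t f).coeff d = coeffWrt t d f := by
  classical
  conv_lhs => rw [f.as_sum]
  rw [toUni, map_sum, Polynomial.finsetSum_coeff, coeffWrt, Finset.sum_filter]
  refine Finset.sum_congr rfl fun m _ => ?_
  rw [← toUni, toUni_monomial, Polynomial.coeff_C_mul, Polynomial.coeff_X_pow]
  split_ifs with h h' h' <;> simp_all

lemma eval_toUni (t : σ) (f : MvPolynomial σ K) : (toUni t f).eval (X t) = f := by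
  conv_lhs => rw [f.as_sum]
  conv_rhs => rw [f.as_sum]
  rw [toUni, map_sum, Polynomial.eval_finsetSum]
  refine Finset.sum_congr rfl fun m _ => ?_
  rw [← toUni, toUni_monomial, Polynomial.eval_mul, Polynomial.eval_C, Polynomial.eval_pow,
    Polynomial.eval_X, X_pow_eq_monomial, monomial_mul, mul_one,
    ← Finsupp.erase_eq_update_zero, Finsupp.erase_add_single]

lemma toUni_eq_C {t : σ} {s : MvPolynomial σ K} (hs : degreeOf t s = 0) :
    toUni t s = Polynomial.C s := by
  conv_lhs => rw [s.as_sum]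
  conv_rhs => rw [s.as_sum]
  rw [toUni, map_sum, map_sum]
  refine Finset.sum_congr rfl fun m hm => ?_
  have hmt : m t = 0 := Nat.le_zero.mp ((degreeOf_le_iff.mp hs.le) m hm)
  have hupd : m.update t 0 = m := by rw [← hmt, Finsupp.update_self]
  rw [← toUni, toUni_monomial, hupd, hmt, pow_zero, mul_one]

lemma natDegree_toUni (t : σ) (f : MvPolynomial σ K) :
    (toUni t f).natDegree = degreeOf t f := by
  refine le_antisymm (Polynomial.natDegree_le_iff_coeff_eq_zero.mpr fun d hd => ?_) ?_
  · rw [coeff_toUni, coeffWrt, Finset.sum_eq_zero]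
    intro m hm
    have := monomial_le_degreeOf t (Finset.mem_filter.mp hm).1
    have := (Finset.mem_filter.mp hm).2
    omega
  · rcases eq_or_ne f 0 with rfl | hf
    · simp
    obtain ⟨m, hm, hmax⟩ := Finset.exists_mem_eq_sup f.support (support_nonempty.mpr hf) (· t)
    rw [degreeOf_eq_sup, hmax]
    refine Polynomial.le_natDegree_of_ne_zero fun h => ?_
    rw [coeff_toUni] at h
    simpa [h] using update_mem_support_coeffWrt (t := t) hm

lemma toUni_ne_zero {t : σ} {f : MvPolynomial σ K} (hf : f ≠ 0) : toUni t f ≠ 0 := fun h =>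
  hf (by rw [← eval_toUni t f, h, Polynomial.eval_zero])

lemma degree_toUni {t : σ} {f : MvPolynomial σ K} (hf : f ≠ 0) :
    (toUni t f).degree = degreeOf t f := by
  rw [Polynomial.degree_eq_natDegree (toUni_ne_zero hf), natDegree_toUni]

lemma degreeOf_lt_of_degree_toUni_lt {t : σ} {f : MvPolynomial σ K} {D : ℕ} (hD : 1 ≤ D)
    (hf : (toUni t f).degree < D) : degreeOf t f < D := by
  rw [← natDegree_toUni]
  have := Polynomial.natDegree_le_iff_coeff_eq_zero.mpr fun m (hm : D - 1 < m) =>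
    (Polynomial.degree_lt_iff_coeff_zero _ _).mp hf m (by omega)
  omega

lemma initialWrt_eq_leadingCoeff (t : σ) (f : MvPolynomial σ K) :
    initialWrt t f = (toUni t f).leadingCoeff := by
  rw [Polynomial.leadingCoeff, natDegree_toUni, coeff_toUni, initialWrt]

lemma initialWrt_ne_zero {t : σ} {f : MvPolynomial σ K} (hf : f ≠ 0) :
    initialWrt t f ≠ 0 := by
  rw [initialWrt_eq_leadingCoeff, Ne, Polynomial.leadingCoeff_eq_zero]
  exact toUni_ne_zero hf

lemma coeffWrt_mul_of_degreeOf_eq_zero {t : σ} {s : MvPolynomial σ K} (hs : degreeOf t s = 0)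
    (d : ℕ) (f : MvPolynomial σ K) : coeffWrt t d (s * f) = s * coeffWrt t d f := by
  rw [← coeff_toUni, toUni, map_mul, ← toUni, ← toUni, toUni_eq_C hs, Polynomial.coeff_C_mul,
    coeff_toUni]

end UnivariateView

section SpanOfFree

variable {K : Type*} [Field K] {σ : Type*} [LinearOrder σ]

noncomputable def toUniQuot (t : σ) (I : Ideal (MvPolynomial σ K)) :
    MvPolynomial σ K →+* Polynomial (MvPolynomial σ K ⧸ I) :=
  (Polynomial.mapRingHom (Ideal.Quotient.mk I)).comp
    (aeval fun j => if j = t then Polynomial.X else Polynomial.C (X j)).toRingHom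

lemma toUniQuot_apply (t : σ) (I : Ideal (MvPolynomial σ K)) (p : MvPolynomial σ K) :
    toUniQuot t I p = (toUni t p).map (Ideal.Quotient.mk I) := rfl

lemma toUniQuot_eq_zero_iff {t : σ} {I : Ideal (MvPolynomial σ K)} {p : MvPolynomial σ K} :
    toUniQuot t I p = 0 ↔ ∀ d, coeffWrt t d p ∈ I := by
  simp [toUniQuot_apply, Polynomial.ext_iff, coeff_toUni, Ideal.Quotient.eq_zero_iff_mem]

lemma mem_of_forall_coeffWrt_mem {t : σ} {I : Ideal (MvPolynomial σ K)} {p : MvPolynomial σ K}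
    (h : ∀ d, coeffWrt t d p ∈ I) : p ∈ I := by
  rw [← eval_toUni t p, Polynomial.eval_eq_sum_range]
  exact Ideal.sum_mem _ fun d _ => Ideal.mul_mem_right _ _ (by rw [coeff_toUni]; exact h d)

lemma mem_span_iff_forall_coeffWrt_mem {t : σ} {S : Set (MvPolynomial σ K)}
    (hS : ∀ p ∈ S, degreeOf t p = 0) {p : MvPolynomial σ K} :
    p ∈ Ideal.span S ↔ ∀ d, coeffWrt t d p ∈ Ideal.span S := by
  refine ⟨fun hp => toUniQuot_eq_zero_iff.mp ?_, mem_of_forall_coeffWrt_mem⟩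
  refine (Ideal.span_le (I := RingHom.ker (toUniQuot t (Ideal.span S)))).mpr ?_ hp
  intro s hs
  rw [SetLike.mem_coe, RingHom.mem_ker, toUniQuot_apply, toUni_eq_C (hS s hs), Polynomial.map_C,
    Ideal.Quotient.eq_zero_iff_mem.mpr (Ideal.subset_span hs), map_zero]

lemma exists_pow_initialWrt_mul_mem_span {t : σ} {Q g : MvPolynomial σ K}
    {S : Set (MvPolynomial σ K)} (hS : ∀ p ∈ S, degreeOf t p = 0)
    (hg : g ∈ Ideal.span (insert Q S)) (hdeg : degreeOf t g < degreeOf t Q) :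
    ∃ N : ℕ, initialWrt t Q ^ N * g ∈ Ideal.span S := by
  obtain ⟨A, z, hz, rfl⟩ := Ideal.mem_span_insert.mp hg
  set φ := toUniQuot t (Ideal.span S)
  have hφz : φ z = 0 := toUniQuot_eq_zero_iff.mpr ((mem_span_iff_forall_coeffWrt_mem hS).mp hz)
  have hφQ : (φ Q).natDegree ≤ degreeOf t Q :=
    Polynomial.natDegree_map_le.trans (natDegree_toUni t Q).le
  -- `φ` kills `span S`, so `φ A * φ Q = φ g` has degree below `degreeOf t Q`
  have hdegφ : (φ A * φ Q).degree < degreeOf t Q := by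
    rw [← map_mul, ← add_zero (φ (A * Q)), ← hφz, ← map_add]
    refine Polynomial.degree_le_natDegree.trans_lt (WithBot.coe_lt_coe.mpr ?_)
    exact Polynomial.natDegree_map_le.trans_lt ((natDegree_toUni t _).trans_lt hdeg)
  obtain ⟨N, hN⟩ := Polynomial.exists_C_pow_mul_eq_zero_of_degree_mul_lt hφQ hdegφ
  refine ⟨N, (mem_span_iff_forall_coeffWrt_mem hS).mpr (toUniQuot_eq_zero_iff.mp ?_)⟩
  have hφi : φ (initialWrt t Q) = Polynomial.C ((φ Q).coeff (degreeOf t Q)) := by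
    rw [toUniQuot_apply, toUni_eq_C (degreeOf_initialWrt_self t Q), Polynomial.map_C,
      toUniQuot_apply, Polynomial.coeff_map, coeff_toUni, initialWrt]
  rw [map_mul, map_pow, map_add, map_mul, hφz, add_zero, hφi, ← mul_assoc, hN, zero_mul]

end SpanOfFree

section PseudoDivision

variable {K : Type*} [Field K] {σ : Type*} [LinearOrder σ]

lemma exists_pow_initialWrt_mul_eq_mul_add {t : σ} {Q : MvPolynomial σ K}
    (hQ : 1 ≤ degreeOf t Q) (h : MvPolynomial σ K) :
    ∃ (N : ℕ) (B r : MvPolynomial σ K),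
      initialWrt t Q ^ N * h = B * Q + r ∧ degreeOf t r < degreeOf t Q := by
  induction hD : degreeOf t h using Nat.strong_induction_on generalizing h with
  | _ D ih =>
  by_cases hlt : D < degreeOf t Q
  · exact ⟨0, 0, h, by ring, hD ▸ hlt⟩
  have hQ0 : Q ≠ 0 := ne_zero_of_degreeOf_ne_zero (i := t) (by omega)
  have hh0 : h ≠ 0 := ne_zero_of_degreeOf_ne_zero (i := t) (by omega)
  set e := D - degreeOf t Q
  -- cancel the leading term of `h` in `t` against `Q`
  have hdrop : degreeOf t
      (initialWrt t Q * h - initialWrt t h * X t ^ e * Q) < D := by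
    refine degreeOf_lt_of_degree_toUni_lt (by omega) ?_
    have hsplit : toUni t (initialWrt t Q * h - initialWrt t h * X t ^ e * Q) =
        Polynomial.C (initialWrt t Q) * toUni t h -
          Polynomial.C (initialWrt t h) * Polynomial.X ^ e * toUni t Q := by
      simp only [toUni, map_sub, map_mul, map_pow, aeval_X, ↓reduceIte]
      rw [← toUni, ← toUni, ← toUni, ← toUni, toUni_eq_C (degreeOf_initialWrt_self t Q),
        toUni_eq_C (degreeOf_initialWrt_self t h)]
    have hleft : (Polynomial.C (initialWrt t Q) * toUni t h).degree = D := by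
      rw [Polynomial.degree_C_mul (initialWrt_ne_zero hQ0), degree_toUni hh0, hD]
    rw [hsplit, ← hleft]
    refine Polynomial.degree_sub_lt_left ?_ ?_ ?_
    · rw [hleft, Polynomial.degree_mul, Polynomial.degree_C_mul_X_pow _ (initialWrt_ne_zero hh0),
        degree_toUni hQ0, ← Nat.cast_add]
      congr 1
      omega
    · exact mul_ne_zero (by simpa using initialWrt_ne_zero hQ0) (toUni_ne_zero hh0)
    · rw [Polynomial.leadingCoeff_mul, Polynomial.leadingCoeff_mul,
        Polynomial.leadingCoeff_C_mul_X_pow, Polynomial.leadingCoeff_C,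
        ← initialWrt_eq_leadingCoeff, ← initialWrt_eq_leadingCoeff, mul_comm]
  obtain ⟨N, B, r, heq, hr⟩ := ih _ hdrop _ rfl
  refine ⟨N + 1, initialWrt t Q ^ N * initialWrt t h * X t ^ e + B, r, ?_, hr⟩
  linear_combination heq

end PseudoDivision

section PolynomialLists

variable {K : Type*} [Field K] {σ : Type*}

lemma degreeOf_mul_eq_zero {t : σ} {a b : MvPolynomial σ K} (ha : degreeOf t a = 0)
    (hb : degreeOf t b = 0) : degreeOf t (a * b) = 0 := by
  have := degreeOf_mul_le t a b
  omega

lemma degreeOf_pow_eq_zero {t : σ} {a : MvPolynomial σ K} (ha : degreeOf t a = 0) (n : ℕ) :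
    degreeOf t (a ^ n) = 0 := by
  have := degreeOf_pow_le t a n
  simp_all

lemma degreeOf_list_prod_eq_zero {t : σ} {l : List (MvPolynomial σ K)}
    (h : ∀ p ∈ l, degreeOf t p = 0) : degreeOf t l.prod = 0 := by
  induction l with
  | nil => exact degreeOf_one t
  | cons a l ih =>
    rw [List.prod_cons]
    exact degreeOf_mul_eq_zero (h a (by simp)) (ih fun p hp => h p (List.mem_cons_of_mem a hp))

noncomputable def polySpan (L : List (σ × MvPolynomial σ K)) : Ideal (MvPolynomial σ K) :=
  Ideal.span {p | ∃ e ∈ L, p = e.2}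

noncomputable def initProd (L : List (σ × MvPolynomial σ K)) : MvPolynomial σ K :=
  (L.map fun e => initialWrt e.1 e.2).prod

lemma polySpan_nil : polySpan ([] : List (σ × MvPolynomial σ K)) = ⊥ := by
  simp [polySpan]

lemma polySpan_mono {L L' : List (σ × MvPolynomial σ K)} (h : L'.Sublist L) :
    polySpan L' ≤ polySpan L :=
  Ideal.span_mono fun _ ⟨e, he, hp⟩ => ⟨e, h.subset he, hp⟩

lemma polySpan_append_singleton (L : List (σ × MvPolynomial σ K)) (e : σ × MvPolynomial σ K) :
    polySpan (L ++ [e]) = Ideal.span (insert e.2 {p | ∃ e' ∈ L, p = e'.2}) := by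
  unfold polySpan
  congr 1
  ext p
  simp [or_comm, eq_comm]

lemma initProd_append_singleton (L : List (σ × MvPolynomial σ K)) (e : σ × MvPolynomial σ K) :
    initProd (L ++ [e]) = initProd L * initialWrt e.1 e.2 := by
  simp [initProd]

end PolynomialLists

section NormalTriangular

variable {K : Type*} [Field K] {σ : Type*} [LinearOrder σ]

lemma HasLV.ne_zero {f : MvPolynomial σ K} {l : σ} (h : HasLV f l) : f ≠ 0 := by
  rintro rfl
  simpa using h.1

lemma HasLV.one_le_degreeOf {f : MvPolynomial σ K} {l : σ} (h : HasLV f l) :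
    1 ≤ degreeOf l f :=
  Nat.one_le_iff_ne_zero.mpr (mem_vars_iff_degreeOf_ne_zero.mp h.1)

lemma HasLV.degreeOf_eq_zero_of_lt {f : MvPolynomial σ K} {l t : σ} (h : HasLV f l)
    (hlt : l < t) : degreeOf t f = 0 := by
  by_contra hne
  exact (h.2 t (mem_vars_iff_degreeOf_ne_zero.mpr hne)).not_gt hlt

structure IsNormalTriangular (L : List (σ × MvPolynomial σ K)) : Prop where
  sorted : L.Pairwise fun e e' => e.1 < e'.1
  hasLV : ∀ e ∈ L, HasLV e.2 e.1
  degreeOf_initialWrt : ∀ e ∈ L, ∀ e' ∈ L, degreeOf e'.1 (initialWrt e.1 e.2) = 0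

lemma IsNormalTriangular.sublist {L L' : List (σ × MvPolynomial σ K)}
    (hL : IsNormalTriangular L) (h : L'.Sublist L) : IsNormalTriangular L' where
  sorted := hL.sorted.sublist h
  hasLV e he := hL.hasLV e (h.subset he)
  degreeOf_initialWrt e he e' he' := hL.degreeOf_initialWrt e (h.subset he) e' (h.subset he')

lemma TriSet.Normal.isNormalTriangular {C : TriSet K σ} (hC : C.Normal) :
    IsNormalTriangular C.elems where
  sorted := C.sorted
  hasLV := C.hlv
  degreeOf_initialWrt e he e' he' := by
    by_contra hne
    exact hC e he e'.1 (mem_vars_iff_degreeOf_ne_zero.mpr hne) (List.mem_map_of_mem he')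

lemma IsNormalTriangular.initProd_ne_zero {L : List (σ × MvPolynomial σ K)}
    (hL : IsNormalTriangular L) : initProd L ≠ 0 := by
  refine List.prod_ne_zero fun h => ?_
  obtain ⟨e, he, h0⟩ := List.mem_map.mp h
  exact initialWrt_ne_zero (hL.hasLV e he).ne_zero h0

lemma IsNormalTriangular.degreeOf_initProd {L : List (σ × MvPolynomial σ K)}
    (hL : IsNormalTriangular L) {e : σ × MvPolynomial σ K} (he : e ∈ L) :
    degreeOf e.1 (initProd L) = 0 := by
  refine degreeOf_list_prod_eq_zero fun p hp => ?_
  obtain ⟨e', he', rfl⟩ := List.mem_map.mp hp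
  exact hL.degreeOf_initialWrt e' he' e he

lemma IsNormalTriangular.initialWrt_ne_zero {L : List (σ × MvPolynomial σ K)}
    (hL : IsNormalTriangular L) {e : σ × MvPolynomial σ K} (he : e ∈ L) :
    initialWrt e.1 e.2 ≠ 0 :=
  CharDec.initialWrt_ne_zero (hL.hasLV e he).ne_zero

lemma IsNormalTriangular.degreeOf_pow_initialWrt_mul {L : List (σ × MvPolynomial σ K)}
    (hL : IsNormalTriangular L) {e : σ × MvPolynomial σ K} (he : e ∈ L)
    {s : MvPolynomial σ K} (hs : ∀ e' ∈ L, degreeOf e'.1 s = 0) (N : ℕ) :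
    ∀ e' ∈ L, degreeOf e'.1 (initialWrt e.1 e.2 ^ N * s) = 0 := fun e' he' =>
  degreeOf_mul_eq_zero (degreeOf_pow_eq_zero (hL.degreeOf_initialWrt e he e' he') N) (hs e' he')

lemma IsNormalTriangular.exists_pow_initialWrt_mul_mem {L : List (σ × MvPolynomial σ K)}
    {t : σ} {Q g : MvPolynomial σ K} (hL : IsNormalTriangular (L ++ [(t, Q)]))
    (hg : g ∈ polySpan (L ++ [(t, Q)])) (hdeg : degreeOf t g < degreeOf t Q) :
    ∃ N : ℕ, initialWrt t Q ^ N * g ∈ polySpan L := by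
  rw [polySpan_append_singleton] at hg
  refine exists_pow_initialWrt_mul_mem_span ?_ hg hdeg
  rintro _ ⟨e, he, rfl⟩
  refine (hL.hasLV e (by simp [he])).degreeOf_eq_zero_of_lt ?_
  exact (List.pairwise_append.mp hL.sorted).2.2 e he (t, Q) (by simp)

lemma IsNormalTriangular.exists_pow_initProd_mul_mem {L : List (σ × MvPolynomial σ K)}
    (hL : IsNormalTriangular L) {s f : MvPolynomial σ K} (hs0 : s ≠ 0)
    (hs : ∀ e ∈ L, degreeOf e.1 s = 0) (hsf : s * f ∈ polySpan L) :
    ∃ N : ℕ, initProd L ^ N * f ∈ polySpan L := by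
  induction L using List.reverseRecOn generalizing s f with
  | nil =>
    rw [polySpan_nil, Ideal.mem_bot, mul_eq_zero] at hsf
    exact ⟨0, by simp [hsf.resolve_left hs0]⟩
  | append_singleton L e ih =>
    obtain ⟨t, Q⟩ := e
    have hmem : (t, Q) ∈ L ++ [(t, Q)] := by simp
    have hsub : L.Sublist (L ++ [(t, Q)]) := List.sublist_append_left L _
    have hQ : Q ∈ polySpan (L ++ [(t, Q)]) := Ideal.subset_span ⟨_, hmem, rfl⟩
    -- pseudo-divide `f` by `Q`, then eliminate `Q` from `s * r` and recurse on `L`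
    obtain ⟨N, B, r, hdiv, hr⟩ :=
      exists_pow_initialWrt_mul_eq_mul_add (hL.hasLV _ hmem).one_le_degreeOf f
    have hsr : s * r ∈ polySpan (L ++ [(t, Q)]) := by
      have : s * r = initialWrt t Q ^ N * (s * f) - s * B * Q := by linear_combination -s * hdiv
      rw [this]
      exact sub_mem (Ideal.mul_mem_left _ _ hsf) (Ideal.mul_mem_left _ _ hQ)
    have hdeg : degreeOf t (s * r) < degreeOf t Q :=
      (degreeOf_mul_le t s r).trans_lt (by rw [hs _ hmem, zero_add]; exact hr)
    obtain ⟨M, hM⟩ := hL.exists_pow_initialWrt_mul_mem hsr hdeg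
    obtain ⟨k, hk⟩ := ih (hL.sublist hsub)
      (mul_ne_zero (pow_ne_zero _ (hL.initialWrt_ne_zero hmem)) hs0)
      (fun e he => hL.degreeOf_pow_initialWrt_mul hmem hs M e (hsub.subset he))
      (by rwa [mul_assoc])
    refine ⟨N + k, ?_⟩
    have : initProd (L ++ [(t, Q)]) ^ (N + k) * f =
        initProd L ^ (N + k) * initialWrt t Q ^ k * B * Q +
          initProd L ^ N * initialWrt t Q ^ k * (initProd L ^ k * r) := by
      rw [initProd_append_singleton]
      linear_combination initProd L ^ (N + k) * initialWrt t Q ^ k * hdiv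
    rw [this]
    exact add_mem (Ideal.mul_mem_left _ _ hQ) (Ideal.mul_mem_left _ _ (polySpan_mono hsub hk))

lemma IsNormalTriangular.exists_mul_mem_of_append {L U : List (σ × MvPolynomial σ K)}
    (hLU : IsNormalTriangular (L ++ U)) {s g : MvPolynomial σ K} (hs0 : s ≠ 0)
    (hs : ∀ e ∈ L ++ U, degreeOf e.1 s = 0) (hg : ∀ e ∈ U, degreeOf e.1 g = 0)
    (hsg : s * g ∈ polySpan (L ++ U)) :
    ∃ s' : MvPolynomial σ K, s' ≠ 0 ∧ (∀ e ∈ L, degreeOf e.1 s' = 0) ∧ s' * g ∈ polySpan L := by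
  induction U using List.reverseRecOn generalizing s with
  | nil =>
    rw [List.append_nil] at hs hsg
    exact ⟨s, hs0, hs, hsg⟩
  | append_singleton U e ih =>
    obtain ⟨t, Q⟩ := e
    rw [← List.append_assoc] at hLU hs hsg
    have hmem : (t, Q) ∈ L ++ U ++ [(t, Q)] := by simp
    have hsub : (L ++ U).Sublist (L ++ U ++ [(t, Q)]) := List.sublist_append_left _ _
    have hdeg : degreeOf t (s * g) < degreeOf t Q := by
      have h1 := degreeOf_mul_le t s g
      have h2 : degreeOf t s = 0 := hs _ hmem
      have h3 : degreeOf t g = 0 := hg (t, Q) (by simp)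
      have h4 : 1 ≤ degreeOf t Q := (hLU.hasLV _ hmem).one_le_degreeOf
      omega
    obtain ⟨N, hN⟩ := hLU.exists_pow_initialWrt_mul_mem hsg hdeg
    exact ih (hLU.sublist hsub) (mul_ne_zero (pow_ne_zero _ (hLU.initialWrt_ne_zero hmem)) hs0)
      (fun e he => hLU.degreeOf_pow_initialWrt_mul hmem hs N e (hsub.subset he))
      (fun e he => hg e (by simp [he])) (by rwa [mul_assoc])

end NormalTriangular

section Saturation

variable {K : Type*} [Field K] {σ : Type*} [LinearOrder σ]

lemma TriSet.Normal.eq_zero_of_mem_sat {C : TriSet K σ} (hC : C.Normal) {p : MvPolynomial σ K}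
    (hp : p ∈ C.sat) (hfree : ∀ e ∈ C.elems, degreeOf e.1 p = 0) : p = 0 := by
  obtain ⟨k, hk⟩ := hp
  by_contra hp0
  -- eliminating all of `C` from `C.prodInit ^ k * p * 1 ∈ ⟨C⟩` leaves a nonzero element of `⊥`
  have hT : IsNormalTriangular ([] ++ C.elems) := hC.isNormalTriangular
  obtain ⟨s, hs0, -, hs⟩ := hT.exists_mul_mem_of_append (g := 1)
    (mul_ne_zero (pow_ne_zero k hT.initProd_ne_zero) hp0)
    (fun e he => degreeOf_mul_eq_zero (degreeOf_pow_eq_zero (hT.degreeOf_initProd he) k)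
      (hfree e he))
    (fun _ _ => degreeOf_one _) (by rwa [mul_one])
  rw [polySpan_nil, Ideal.mem_bot, mul_one] at hs
  exact hs0 hs

lemma TriSet.Normal.coeffWrt_mem_sat {C : TriSet K σ} (hC : C.Normal) {f : MvPolynomial σ K}
    (hf : f ∈ C.sat) {l : σ} (hl : l ∉ C.lvs) (hvars : ∀ j ∈ f.vars, j ≤ l) (d : ℕ) :
    coeffWrt l d f ∈ C.sat := by
  obtain ⟨k, hk⟩ := hf
  obtain ⟨L, U, hLU, hL, hU⟩ := exists_eq_append_of_pairwise_fst_lt C.sorted l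
  have hC' := hC.isNormalTriangular
  have hT : IsNormalTriangular (L ++ U) := hLU ▸ hC'
  have hsub : L.Sublist C.elems := hLU ▸ List.sublist_append_left L U
  have hUf : ∀ e ∈ U, degreeOf e.1 f = 0 := by
    intro e he
    have hle : l < e.1 := (hU e he).lt_of_ne fun h =>
      hl (h ▸ List.mem_map_of_mem (hLU ▸ List.mem_append_right L he))
    by_contra hne
    exact (hvars _ (mem_vars_iff_degreeOf_ne_zero.mpr hne)).not_gt hle
  -- eliminate the elements above `l`; what remains, and its initials, do not involve `l`
  obtain ⟨s, hs0, hs, hsf⟩ := hT.exists_mul_mem_of_append (s := C.prodInit ^ k) (g := f)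
    (pow_ne_zero k hC'.initProd_ne_zero)
    (fun e he => degreeOf_pow_eq_zero (hC'.degreeOf_initProd (hLU ▸ he)) k)
    hUf (by rwa [← hLU])
  obtain ⟨N, hN⟩ :=
    (hT.sublist (List.sublist_append_left L U)).exists_pow_initProd_mul_mem hs0 hs hsf
  have hLl : ∀ e ∈ L, degreeOf l e.2 = 0 := fun e he =>
    (C.hlv e (hsub.subset he)).degreeOf_eq_zero_of_lt (hL e he)
  have hJ : degreeOf l (initProd L ^ N) = 0 := by
    refine degreeOf_pow_eq_zero (degreeOf_list_prod_eq_zero fun p hp => ?_) N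
    obtain ⟨e, he, rfl⟩ := List.mem_map.mp hp
    exact Nat.le_zero.mp ((degreeOf_coeffWrt_le l _ _ e.2).trans (hLl e he).le)
  have hcoeff := (mem_span_iff_forall_coeffWrt_mem (t := l) (S := {p | ∃ e ∈ L, p = e.2})
    (by rintro _ ⟨e, he, rfl⟩; exact hLl e he)).mp hN d
  rw [coeffWrt_mul_of_degreeOf_eq_zero hJ] at hcoeff
  obtain ⟨c, hc⟩ : initProd L ∣ C.prodInit := (hsub.map _).prod_dvd_prod
  refine ⟨N, ?_⟩
  rw [hc, mul_pow, mul_comm (initProd L ^ N), mul_assoc]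
  exact Ideal.mul_mem_left _ _ (polySpan_mono hsub hcoeff)

end Saturation

section LeadingVariables

variable {K : Type*} [Field K] {σ : Type*} [LinearOrder σ]

lemma exists_hasLV {f : MvPolynomial σ K} (hf : f.vars.Nonempty) : ∃ l, HasLV f l :=
  ⟨f.vars.max' hf, f.vars.max'_mem hf, fun j hj => f.vars.le_max' j hj⟩

lemma IsLeadMon.apply_eq_degreeOf {f : MvPolynomial σ K} {m : σ →₀ ℕ} {l : σ}
    (hm : IsLeadMon f m) (hlv : HasLV f l) : m l = degreeOf l f := by
  obtain ⟨m₀, hm₀, hmax⟩ :=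
    Finset.exists_mem_eq_sup f.support (support_nonempty.mpr hlv.ne_zero) (· l)
  have hdeg : m₀ l = degreeOf l f := by rw [degreeOf_eq_sup, hmax]
  have hle : m l ≤ degreeOf l f := monomial_le_degreeOf l hm.1
  rcases hm.2 m₀ hm₀ with rfl | ⟨i, hi, heq⟩
  · exact hdeg
  rcases lt_trichotomy i l with hil | rfl | hli
  · rw [← heq l hil, hdeg]
  · omega
  · have := monomial_le_degreeOf i hm.1
    rw [hlv.degreeOf_eq_zero_of_lt hli] at this
    omega

lemma HasLV.mem_vars_initialWrt {f g : MvPolynomial σ K} {i l : σ} (hf : HasLV f i)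
    (hg : HasLV g l) (hli : l ≠ i) {mf mg : σ →₀ ℕ} (hmf : IsLeadMon f mf)
    (hmg : IsLeadMon g mg) (hle : ∀ j, mg j ≤ mf j) : l ∈ (initialWrt i f).vars := by
  classical
  have hsupp : mf.update i 0 ∈ (initialWrt i f).support := by
    rw [initialWrt, ← hmf.apply_eq_degreeOf hf]
    exact update_mem_support_coeffWrt hmf.1
  refine (mem_vars_iff_mem_support l).mpr ⟨_, hsupp, ?_⟩
  rw [Finsupp.mem_support_iff, Finsupp.update_apply, if_neg hli]
  have := hle l
  have := hmg.apply_eq_degreeOf hg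
  have := hg.one_le_degreeOf
  omega

end LeadingVariables

section ReducedGB

variable {K : Type*} [Field K] {σ : Type*} [LinearOrder σ]

lemma TriSet.Normal.mem_lvs_of_hasLV {C : TriSet K σ} (hC : C.Normal)
    {Gb : Set (MvPolynomial σ K)} (hGb : IsReducedGB Gb C.sat) {g : MvPolynomial σ K}
    (hg : g ∈ Gb) {l : σ} (hlv : HasLV g l) : l ∈ C.lvs := by
  classical
  obtain ⟨⟨-, hsub, hlead⟩, -, -, hred⟩ := hGb
  by_contra hl
  have hinit : initialWrt l g ∈ C.sat := hC.coeffWrt_mem_sat (hsub hg) hl hlv.2 _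
  obtain ⟨g', hg', mi, m', hmi, hm', hle⟩ :=
    hlead _ hinit (initialWrt_ne_zero hlv.ne_zero)
  obtain ⟨hmil, hmig⟩ := mem_support_coeffWrt.mp hmi.1
  have hm'l : m' l = 0 := Nat.le_zero.mp (hmil ▸ hle l)
  refine hred g hg g' hg' ?_ _ hmig m' hm' fun j => ?_
  · rintro rfl
    have := hm'.apply_eq_degreeOf hlv
    have := hlv.one_le_degreeOf
    omega
  · rw [Finsupp.update_apply]
    split_ifs with hj
    · rw [hj, hm'l]
      exact Nat.zero_le _
    · exact hle j

lemma TriSet.Normal.exists_hasLV_of_mem_lvs {C : TriSet K σ} (hC : C.Normal)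
    {Gb : Set (MvPolynomial σ K)} (hGb : IsReducedGB Gb C.sat) {i : σ} (hi : i ∈ C.lvs) :
    ∃ g ∈ Gb, HasLV g i := by
  obtain ⟨e, he, rfl⟩ := List.mem_map.mp hi
  have hlv := C.hlv e he
  have hmem : e.2 ∈ C.sat := ⟨0, by rw [pow_zero, one_mul]; exact Ideal.subset_span ⟨e, he, rfl⟩⟩
  obtain ⟨g, hg, mf, mg, hmf, hmg, hle⟩ := hGb.1.2.2 _ hmem hlv.ne_zero
  have hvars : g.vars.Nonempty := by
    rw [Finset.nonempty_iff_ne_empty]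
    intro hv
    refine hGb.2.1 (hC.eq_zero_of_mem_sat (hGb.1.2.1 hg) (fun e _ => ?_) ▸ hg)
    by_contra hne
    simpa [hv] using mem_vars_iff_degreeOf_ne_zero.mpr hne
  obtain ⟨l, hglv⟩ := exists_hasLV hvars
  obtain rfl : l = e.1 := by
    by_contra hne
    exact hC e he l (hlv.mem_vars_initialWrt hglv hne hmf hmg hle)
      (hC.mem_lvs_of_hasLV hGb hg hglv)
  exact ⟨g, hg, hglv⟩

lemma TriSet.Normal.exists_hasLV_iff {C : TriSet K σ} (hC : C.Normal)
    {Gb : Set (MvPolynomial σ K)} (hGb : IsReducedGB Gb C.sat) (i : σ) :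
    (∃ g ∈ Gb, HasLV g i) ↔ i ∈ C.lvs :=
  ⟨fun ⟨_, hg, hlv⟩ => hC.mem_lvs_of_hasLV hGb hg hlv, hC.exists_hasLV_of_mem_lvs hGb⟩

lemma IsWCharOf.exists_hasLV_iff {C : TriSet K σ} {G : Set (MvPolynomial σ K)}
    (hC : IsWCharOf C G) (i : σ) : (∃ g ∈ G, HasLV g i) ↔ i ∈ C.lvs := by
  refine ⟨fun ⟨g, hg, hlv⟩ => hC.2 g hg i hlv, fun hi => ?_⟩
  obtain ⟨e, he, rfl⟩ := List.mem_map.mp hi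
  exact ⟨e.2, (hC.1 e he).1, C.hlv e he⟩

end ReducedGB

end CharDec

open CharDec MvPolynomial

theorem stmt_12_general {K : Type*} [Field K] {n : ℕ}
    (G Gb : Set (MvPolynomial (Fin n) K)) (C : TriSet K (Fin n))
    (hC : IsWCharOf C G) (hCn : C.Normal)
    (hGb : IsReducedGB Gb C.sat) :
    {i : Fin n | ∃ g ∈ G, HasLV g i} = {i : Fin n | ∃ g ∈ Gb, HasLV g i} := by
  ext i
  exact (hC.exists_hasLV_iff i).trans (hCn.exists_hasLV_iff hGb i).symm

/-- Let `(G, C)` be a characteristic pair, `Ḡ` the reduced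
lex Gröbner basis of `sat(C)` and `C̄` the W-characteristic set of `⟨Ḡ⟩`.
Then the set of leading variables of `Ḡ` equals that of `G` (equivalently,
the parameters of `C̄` coincide with those of `C`). -/
theorem stmt_12 {K : Type*} [Field K] {n : ℕ}
    (G Gb : Set (MvPolynomial (Fin n) K)) (C Cb : TriSet K (Fin n))
    (hG : IsReducedGB G (Ideal.span G)) (hC : IsWCharOf C G) (hCn : C.Normal)
    (hGb : IsReducedGB Gb C.sat) (hCb : IsWCharOf Cb Gb) :
    {i : Fin n | ∃ g ∈ G, HasLV g i} = {i : Fin n | ∃ g ∈ Gb, HasLV g i} :=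
  stmt_12_general G Gb C hC hCn hGb
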